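/- arXiv:1310.5746 — 6 statements merged into one kernel-verified Lean document; each statement's English description precedes it below -/
import Mathlib

section
/- For every allowed parameter pair (k,h) (i.e., h ≥ k, and k = 0 implies h = 0), any extremal tree of Horton-Strahler number k and height h has exactly α(k,h) := Σ_{i=0}^{k} binom(h,i) leaves. -/
/-- Full binary trees: every inner node has exactly two children. -/
inductive BTree where
  | leaf : BTree
  | node : BTree → BTree → BTree

/-- Height of a full binary tree. -/
def BTree.height : BTree → ℕ
  | .leaf => 0
  | .node t1 t2 => 1 + max t1.height t2.height

/-- Horton-Strahler number of a full binary tree. -/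
def BTree.hs : BTree → ℕ
  | .leaf => 0
  | .node t1 t2 => if t1.hs = t2.hs then t1.hs + 1 else max t1.hs t2.hs

/-- Number of leaves. -/
def BTree.leaves : BTree → ℕ
  | .leaf => 1
  | .node t1 t2 => t1.leaves + t2.leaves

/-- Number of nodes. -/
def BTree.nodes : BTree → ℕ
  | .leaf => 1
  | .node t1 t2 => 1 + t1.nodes + t2.nodes

/-- Extremal trees of Horton-Strahler number k and height h (recursive characterisation). -/
inductive Extremal : ℕ → ℕ → BTree → Prop where
  | base : Extremal 0 0 .leaf
  | nodeL (k h : ℕ) (T1 T2 : BTree) : k + 1 ≤ h + 1 →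
      Extremal k h T1 → Extremal (min (k + 1) h) h T2 →
      Extremal (k + 1) (h + 1) (.node T1 T2)
  | nodeR (k h : ℕ) (T1 T2 : BTree) : k + 1 ≤ h + 1 →
      Extremal k h T1 → Extremal (min (k + 1) h) h T2 →
      Extremal (k + 1) (h + 1) (.node T2 T1)

lemma pascal_sum (h n : ℕ) :
    ∑ i ∈ Finset.range (n + 1), (h + 1).choose i =
      ∑ i ∈ Finset.range (n + 1), h.choose i + ∑ i ∈ Finset.range n, h.choose i := by
  induction n with
  | zero => simp
  | succ n ih =>
    simp only [Finset.sum_range_succ, ih, Nat.choose_succ_succ']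
    ring

lemma key (k h : ℕ) (hk : k ≤ h) :
    ∑ i ∈ Finset.range (k + 1 + 1), (h + 1).choose i =
      ∑ i ∈ Finset.range (k + 1), h.choose i +
        ∑ i ∈ Finset.range (min (k + 1) h + 1), h.choose i := by
  rw [pascal_sum]
  rcases lt_or_eq_of_le hk with hlt | rfl
  · rw [min_eq_left hlt, Nat.add_comm]
  · rw [min_eq_right (Nat.le_succ k), Finset.sum_range_succ,
      Nat.choose_succ_self, Nat.add_zero, Nat.add_comm]

lemma extremal_leaves_aux (k h : ℕ) (T : BTree) (hT : Extremal k h T) :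
    T.leaves = ∑ i ∈ Finset.range (k + 1), h.choose i := by
  induction hT with
  | base => simp [BTree.leaves]
  | nodeL k h T1 T2 hle h1 h2 ih1 ih2 =>
    show T1.leaves + T2.leaves = _
    rw [ih1, ih2, key k h (Nat.lt_succ_iff.mp hle)]
  | nodeR k h T1 T2 hle h1 h2 ih1 ih2 =>
    show T2.leaves + T1.leaves = _
    rw [ih1, ih2, key k h (Nat.lt_succ_iff.mp hle), Nat.add_comm]

/-- An extremal tree of Horton-Strahler number k and height h, for an allowed parameter
pair (k,h), has exactly α(k,h) = Σ_{i=0}^{k} binom(h,i) leaves. -/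
theorem extremal_leaves (k h : ℕ) (T : BTree) (hkh : k ≤ h) (h0 : k = 0 → h = 0)
    (hT : Extremal k h T) :
    T.leaves = ∑ i ∈ Finset.range (k + 1), h.choose i := by
  exact extremal_leaves_aux k h T hT
end

section
/- If F is a minimal premise set with pure(F) = ⊥ (the empty clause, i.e., F has no pure literals), then F is minimally unsatisfiable. -/
/-- Literals: a variable (ℕ) with a polarity. -/
abbrev Lit := ℕ × Bool

/-- Complement of a literal. -/
def Lit.comp (x : Lit) : Lit := (x.1, !x.2)

/-- A clause is a finite set of literals. -/
abbrev Clause := Finset Lit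

/-- A clause-set (CNF). -/
abbrev ClauseSet := Finset Clause

/-- Complementation of all literals of a clause. -/
def Clause.compl (C : Clause) : Clause := C.image Lit.comp

/-- Value of a literal under a total assignment. -/
def Lit.eval (a : ℕ → Bool) (x : Lit) : Bool := if x.2 then a x.1 else !(a x.1)

/-- A clause is satisfied by an assignment iff some literal evaluates to true. -/
def Clause.sat (a : ℕ → Bool) (C : Clause) : Prop := ∃ x ∈ C, Lit.eval a x = true

/-- An assignment satisfies a clause-set (as CNF) iff it satisfies every clause. -/
def satisfies (a : ℕ → Bool) (F : ClauseSet) : Prop := ∀ C ∈ F, Clause.sat a C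

/-- Semantic entailment of a clause. -/
def entails (F : ClauseSet) (C : Clause) : Prop := ∀ a, satisfies a F → Clause.sat a C

def unsat (F : ClauseSet) : Prop := ¬ ∃ a, satisfies a F

/-- Logical equivalence of clause-sets. -/
def equivCls (F G : ClauseSet) : Prop := ∀ a, satisfies a F ↔ satisfies a G

/-- Minimally unsatisfiable clause-sets. -/
def minUnsat (F : ClauseSet) : Prop := unsat F ∧ ∀ F' ⊂ F, ¬ unsat F'

/-- A clause is complement-free (no clashing pair). -/
def tautFree (C : Clause) : Prop := ∀ x ∈ C, Lit.comp x ∉ C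

/-- F is a minimal premise set for clause C. -/
def mpsFor (F : ClauseSet) (C : Clause) : Prop :=
  tautFree C ∧ entails F C ∧ ∀ F' ⊂ F, ¬ entails F' C

/-- F is a minimal premise set. -/
def isMps (F : ClauseSet) : Prop := ∃ C, mpsFor F C

/-- C is a prime implicate of F. -/
def primeImp (F : ClauseSet) (C : Clause) : Prop :=
  tautFree C ∧ entails F C ∧ ∀ C' ⊂ C, ¬ entails F C'

/-- The set of all prime implicates of F. -/
def primeSet (F : ClauseSet) : Set Clause := {C | primeImp F C}

/-- The set of literals occurring in F. -/
def lits (F : ClauseSet) : Finset Lit := F.sup id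

/-- The pure clause of F: the set of pure literals of F. -/
def pureC (F : ClauseSet) : Clause := (lits F).filter (fun x => Lit.comp x ∉ lits F)

def varsC (C : Clause) : Finset ℕ := C.image Prod.fst

def vars (F : ClauseSet) : Finset ℕ := F.sup varsC

/-- Partial assignments. -/
abbrev PAssign := ℕ → Option Bool

/-- Value of a literal under a partial assignment. -/
def Lit.pval (φ : PAssign) (x : Lit) : Option Bool :=
  (φ x.1).map (fun b => if x.2 then b else !b)

/-- Removing falsified literals from a clause. -/
def papplyC (φ : PAssign) (C : Clause) : Clause := C.filter (fun x => Lit.pval φ x ≠ some false)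

/-- A clause is satisfied by a partial assignment. -/
def csat (φ : PAssign) (C : Clause) : Prop := ∃ x ∈ C, Lit.pval φ x = some true

instance (φ : PAssign) (C : Clause) : Decidable (csat φ C) := by
  unfold csat; exact inferInstance

/-- Application φ * F of a partial assignment to a clause-set. -/
def papply (φ : PAssign) (F : ClauseSet) : ClauseSet :=
  (F.filter (fun C => ¬ csat φ C)).image (papplyC φ)

/-- The partial assignment setting precisely the pure literals of F to false. -/
def pureFalse (F : ClauseSet) : PAssign := fun v =>
  if ((v, true) : Lit) ∈ pureC F then some false
  else if ((v, false) : Lit) ∈ pureC F then some true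
  else none

/-- Doping: add a fresh positive variable `u C` to every clause C. -/
def dope (u : Clause → ℕ) (F : ClauseSet) : ClauseSet :=
  F.image (fun C => insert ((u C, true) : Lit) C)

/-- The doping variables are fresh and pairwise distinct. -/
def freshDoping (u : Clause → ℕ) (F : ClauseSet) : Prop :=
  (∀ C ∈ F, u C ∉ vars F) ∧ Set.InjOn u ↑F

/-- Resolution trees: axioms at leaves, resolution steps at inner nodes
(with the designated resolution literal). -/
inductive ResTree where
  | ax : Clause → ResTree
  | res : Lit → ResTree → ResTree → ResTree

/-- Conclusion clause of a resolution tree. -/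
def ResTree.concl : ResTree → Clause
  | .ax C => C
  | .res x T1 T2 => (T1.concl ∪ T2.concl) \ {x, Lit.comp x}

/-- Validity: at each step the two parents clash in exactly the resolution literal. -/
def ResTree.valid : ResTree → Prop
  | .ax _ => True
  | .res x T1 T2 => T1.valid ∧ T2.valid ∧ T1.concl ∩ Clause.compl T2.concl = {x}

/-- Axioms (leaf clauses) of a resolution tree. -/
def ResTree.axioms : ResTree → ClauseSet
  | .ax C => {C}
  | .res _ T1 T2 => T1.axioms ∪ T2.axioms

/-- Horton-Strahler number of a resolution tree. -/
def ResTree.hts : ResTree → ℕ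
  | .ax _ => 0
  | .res _ T1 T2 => if T1.hts = T2.hts then T1.hts + 1 else max T1.hts T2.hts

/-- Regularity: no resolution variable repeated on a root-to-leaf path. -/
def ResTree.regAux : ResTree → Finset ℕ → Prop
  | .ax _, _ => True
  | .res x T1 T2, S => x.1 ∉ S ∧ T1.regAux (insert x.1 S) ∧ T2.regAux (insert x.1 S)

def ResTree.regular (T : ResTree) : Prop := T.regAux ∅

/-- k-resolution: each step has a parent clause of length at most k. -/
def ResTree.kres (k : ℕ) : ResTree → Prop
  | .ax _ => True
  | .res _ T1 T2 => (T1.concl.card ≤ k ∨ T2.concl.card ≤ k) ∧ T1.kres k ∧ T2.kres k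

/-- F has a resolution refutation of Horton-Strahler number at most k. -/
def refutesLe (F : ClauseSet) (k : ℕ) : Prop :=
  ∃ T : ResTree, T.valid ∧ T.axioms ⊆ F ∧ T.concl = ∅ ∧ T.hts ≤ k

/-- Hardness at most k: every unsatisfiable instantiation has a refutation of
Horton-Strahler number at most k. -/
def hdLe (F : ClauseSet) (k : ℕ) : Prop :=
  ∀ φ : PAssign, unsat (papply φ F) → refutesLe (papply φ F) k

/-- Hardness. -/
noncomputable def hd (F : ClauseSet) : ℕ := sInf {k | hdLe F k}

/-- F has a k-resolution refutation. -/
def kresRefutes (F : ClauseSet) (k : ℕ) : Prop :=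
  ∃ T : ResTree, T.valid ∧ T.axioms ⊆ F ∧ T.concl = ∅ ∧ ResTree.kres k T

/-- Asymmetric width-hardness at most k. -/
def whdLe (F : ClauseSet) (k : ℕ) : Prop :=
  ∀ φ : PAssign, unsat (papply φ F) → kresRefutes (papply φ F) k

/-- Hyperedge E^k_C of the trigger hypergraph of F. -/
def Ek (F : ClauseSet) (k : ℕ) (C : Clause) : Set Clause :=
  {C' | primeImp F C' ∧ C' ∩ Clause.compl C = ∅ ∧ (C' \ C).card ≤ k}

lemma eval_comp (a : ℕ → Bool) (x : Lit) : Lit.eval a (Lit.comp x) = !(Lit.eval a x) := by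
  rcases x with ⟨v, b⟩; cases b <;> simp [Lit.eval, Lit.comp]

/-- A minimal premise set without pure literals is minimally unsatisfiable. -/
theorem mps_no_pure_minUnsat (F : ClauseSet) (hmps : isMps F) (hpure : pureC F = ∅) :
    minUnsat F := by
  obtain ⟨C, htf, hent, hmin⟩ := hmps
  have hpure' : ∀ x ∈ lits F, Lit.comp x ∈ lits F := by
    intro x hx
    by_contra h
    have : x ∈ pureC F := Finset.mem_filter.mpr ⟨hx, h⟩
    simp [hpure] at this
  have key : ∀ x ∈ C, x.1 ∉ vars F := by
    intro x hxC hv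
    obtain ⟨D, hDF, hvD⟩ := Finset.mem_sup.mp hv
    obtain ⟨y, hyD, hy1⟩ := Finset.mem_image.mp hvD
    have hcomp : Lit.comp x ∈ lits F := by
      have hylits : y ∈ lits F := Finset.mem_sup.mpr ⟨D, hDF, hyD⟩
      by_cases hb : y.2 = x.2
      · have hyx : y = x := Prod.ext hy1 hb
        exact hpure' x (hyx ▸ hylits)
      · have hyx : y = Lit.comp x := by
          rcases x with ⟨v, b⟩; rcases y with ⟨w, c⟩
          simp only [Lit.comp] at *
          subst hy1
          cases b <;> cases c <;> simp_all
        exact hyx ▸ hylits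
    obtain ⟨E, hEF, hxE⟩ := Finset.mem_sup.mp hcomp
    have hsub : F.erase E ⊂ F := Finset.erase_ssubset hEF
    apply hmin _ hsub
    intro a ha
    by_cases hE : Clause.sat a E
    · apply hent a
      intro D' hD'
      by_cases h' : D' = E
      · exact h' ▸ hE
      · exact ha D' (Finset.mem_erase.mpr ⟨h', hD'⟩)
    · refine ⟨x, hxC, ?_⟩
      have hne : Lit.eval a (Lit.comp x) ≠ true := fun h => hE ⟨_, hxE, h⟩
      simpa [eval_comp] using hne
  constructor
  · rintro ⟨a, ha⟩
    set b : ℕ → Bool := fun v =>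
      if ((v, true) : Lit) ∈ C then false
      else if ((v, false) : Lit) ∈ C then true else a v with hbdef
    have hbF : satisfies b F := by
      intro D hD
      obtain ⟨y, hyD, hy⟩ := ha D hD
      refine ⟨y, hyD, ?_⟩
      have hvnot : ∀ p : Bool, ((y.1, p) : Lit) ∉ C := by
        intro p hp
        exact key (y.1, p) hp (Finset.mem_sup.mpr ⟨D, hD, Finset.mem_image.mpr ⟨y, hyD, rfl⟩⟩)
      have hb : b y.1 = a y.1 := by simp [hbdef, hvnot true, hvnot false]
      rcases y with ⟨w, c⟩
      simp only [Lit.eval] at hy ⊢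
      rw [hb]; exact hy
    obtain ⟨x, hxC, hx⟩ := hent b hbF
    rcases x with ⟨v, p⟩
    cases p
    · have h1 : ((v, true) : Lit) ∉ C := fun h => htf _ hxC (by simpa [Lit.comp] using h)
      simp [Lit.eval, hbdef, h1, hxC] at hx
    · simp [Lit.eval, hbdef, hxC] at hx
  · intro F' hF' hF'unsat
    exact hmin F' hF' (fun a ha => absurd ⟨a, ha⟩ hF'unsat)
end

section
/- For every minimal premise set F, there is exactly one prime implicate C of F such that F is a minimal premise set for C, and this clause is C = pure(F), the set of pure literals of F. -/
section Aux

lemma mem_lits {F : ClauseSet} {x : Lit} : x ∈ lits F ↔ ∃ C ∈ F, x ∈ C := by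
  simp [lits, Finset.mem_sup]

lemma eval_update (a : ℕ → Bool) (x : Lit) :
    Lit.eval (Function.update a x.1 x.2) x = true := by
  obtain ⟨v, b⟩ := x; cases b <;> simp [Lit.eval, Function.update]

lemma eval_update_false (a : ℕ → Bool) (x : Lit) :
    Lit.eval (Function.update a x.1 (!x.2)) x = false := by
  obtain ⟨v, b⟩ := x; cases b <;> simp [Lit.eval, Function.update]

lemma eval_update_ne (a : ℕ → Bool) (v : ℕ) (b : Bool) (y : Lit) (h : y.1 ≠ v) :
    Lit.eval (Function.update a v b) y = Lit.eval a y := by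
  simp [Lit.eval, Function.update, h]

lemma eq_or_comp {x y : Lit} (h : y.1 = x.1) : y = x ∨ y = Lit.comp x := by
  obtain ⟨v, b⟩ := x; obtain ⟨w, c⟩ := y
  simp only [Lit.comp] at *
  subst h
  cases b <;> cases c <;> simp

lemma entails_mono {F : ClauseSet} {C C' : Clause} (hsub : C ⊆ C') (h : entails F C) :
    entails F C' := by
  intro a ha
  obtain ⟨y, hy, h2⟩ := h a ha
  exact ⟨y, hsub hy, h2⟩

lemma filter_ssub {F : ClauseSet} {x : Lit} (hx : x ∈ lits F) :
    F.filter (fun D => x ∉ D) ⊂ F := by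
  obtain ⟨D, hD, hxD⟩ := mem_lits.mp hx
  refine ⟨Finset.filter_subset _ _, fun hsub => ?_⟩
  have := hsub hD
  simp only [Finset.mem_filter] at this
  exact this.2 hxD

lemma entails_filter (F : ClauseSet) (C' : Clause) (x : Lit)
    (hxc : Lit.comp x ∉ lits F) (hxC : x ∉ C')
    (h : entails F C') : entails (F.filter (fun D => x ∉ D)) C' := by
  intro a ha
  have hsatF : satisfies (Function.update a x.1 x.2) F := by
    intro D hD
    by_cases hxD : x ∈ D
    · exact ⟨x, hxD, eval_update a x⟩
    · obtain ⟨y, hyD, hy⟩ := ha D (Finset.mem_filter.mpr ⟨hD, hxD⟩)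
      refine ⟨y, hyD, ?_⟩
      rw [← hy]
      apply eval_update_ne
      intro h1
      rcases eq_or_comp h1 with rfl | rfl
      · exact hxD hyD
      · exact hxc (mem_lits.mpr ⟨D, hD, hyD⟩)
  obtain ⟨y, hyC, hy⟩ := h _ hsatF
  have hyx : y ≠ x := fun e => hxC (e ▸ hyC)
  have hyxc : y ≠ Lit.comp x := by
    intro e
    rw [e, eval_comp, eval_update] at hy
    simp at hy
  have hne : y.1 ≠ x.1 := by
    intro e
    rcases eq_or_comp e with h1 | h1
    · exact hyx h1
    · exact hyxc h1
  refine ⟨y, hyC, ?_⟩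
  rw [← eval_update_ne a x.1 x.2 y hne]
  exact hy

lemma comp_not_in_lits (F : ClauseSet) (C : Clause) (h : mpsFor F C) :
    ∀ x ∈ C, Lit.comp x ∉ lits F := by
  intro x hxC hmem
  have hss : F.filter (fun D => Lit.comp x ∉ D) ⊂ F := filter_ssub hmem
  have hne := h.2.2 _ hss
  rw [entails] at hne
  push_neg at hne
  obtain ⟨a, ha, hnc⟩ := hne
  have hax : Lit.eval a x = false := by
    cases hax : Lit.eval a x
    · rfl
    · exact absurd ⟨x, hxC, hax⟩ hnc
  have haF : satisfies a F := by
    intro D hD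
    by_cases hcD : Lit.comp x ∈ D
    · refine ⟨Lit.comp x, hcD, ?_⟩
      rw [eval_comp, hax]; rfl
    · exact ha D (Finset.mem_filter.mpr ⟨hD, hcD⟩)
  exact hnc (h.2.1 a haF)

lemma pure_subset (F : ClauseSet) (C : Clause) (h : mpsFor F C) : pureC F ⊆ C := by
  intro x hx
  rw [pureC, Finset.mem_filter] at hx
  by_contra hxC
  exact h.2.2 _ (filter_ssub hx.1) (entails_filter F C x hx.2 hxC h.2.1)

lemma erase_mps (F : ClauseSet) (C : Clause) (h : mpsFor F C) (x : Lit)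
    (hxC : x ∈ C) (hxl : x ∉ lits F) : mpsFor F (C.erase x) := by
  have hxcl : Lit.comp x ∉ lits F := comp_not_in_lits F C h x hxC
  refine ⟨fun y hy hc => h.1 y (Finset.mem_of_mem_erase hy) (Finset.mem_of_mem_erase hc),
    ?_, ?_⟩
  · intro a ha
    have haF : satisfies (Function.update a x.1 (!x.2)) F := by
      intro D hD
      obtain ⟨y, hyD, hy⟩ := ha D hD
      refine ⟨y, hyD, ?_⟩
      rw [← hy]
      apply eval_update_ne
      intro h1
      rcases eq_or_comp h1 with rfl | rfl
      · exact hxl (mem_lits.mpr ⟨D, hD, hyD⟩)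
      · exact hxcl (mem_lits.mpr ⟨D, hD, hyD⟩)
    obtain ⟨y, hyC, hy⟩ := h.2.1 _ haF
    have hyx : y ≠ x := by
      intro e
      rw [e, eval_update_false] at hy
      exact Bool.false_ne_true hy
    have hyxc : y ≠ Lit.comp x := by
      intro e
      exact h.1 x hxC (e ▸ hyC)
    have hne : y.1 ≠ x.1 := by
      intro e
      rcases eq_or_comp e with h1 | h1
      · exact hyx h1
      · exact hyxc h1
    refine ⟨y, Finset.mem_erase.mpr ⟨hyx, hyC⟩, ?_⟩
    rw [← eval_update_ne a x.1 (!x.2) y hne]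
    exact hy
  · intro F' hss he
    exact h.2.2 F' hss (entails_mono (Finset.erase_subset x C) he)

lemma mps_pure_aux (F : ClauseSet) : ∀ n C, C.card ≤ n → mpsFor F C → mpsFor F (pureC F) := by
  intro n
  induction n with
  | zero =>
    intro C hc h
    have hC : C = ∅ := Finset.card_eq_zero.mp (Nat.le_zero.mp hc)
    have : C = pureC F :=
      Finset.Subset.antisymm (by simp [hC]) (pure_subset F C h)
    exact this ▸ h
  | succ n ih =>
    intro C hc h
    by_cases hex : ∃ x ∈ C, x ∉ lits F
    · obtain ⟨x, hxC, hxl⟩ := hex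
      refine ih (C.erase x) ?_ (erase_mps F C h x hxC hxl)
      have := Finset.card_erase_of_mem hxC
      omega
    · push_neg at hex
      have hCsub : C ⊆ pureC F := by
        intro x hx
        rw [pureC, Finset.mem_filter]
        exact ⟨hex x hx, comp_not_in_lits F C h x hx⟩
      have : C = pureC F := Finset.Subset.antisymm hCsub (pure_subset F C h)
      exact this ▸ h

lemma pure_prime (F : ClauseSet) (h : mpsFor F (pureC F)) : primeImp F (pureC F) := by
  refine ⟨h.1, h.2.1, ?_⟩
  intro C' hss he
  obtain ⟨x, hx, hxC'⟩ := Finset.exists_of_ssubset hss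
  have hx' := hx
  rw [pureC, Finset.mem_filter] at hx'
  have h1 := entails_filter F C' x hx'.2 hxC' he
  exact h.2.2 _ (filter_ssub hx'.1) (entails_mono hss.subset h1)

end Aux

/-- For every minimal premise set F there is exactly one prime implicate C of F
such that F is a minimal premise set for C, namely C = pure(F). -/
theorem mps_unique_prime_implicate (F : ClauseSet) (hmps : isMps F) :
    (primeImp F (pureC F) ∧ mpsFor F (pureC F)) ∧
      ∀ C : Clause, primeImp F C → mpsFor F C → C = pureC F := by
  obtain ⟨C₀, h₀⟩ := hmps
  have hp : mpsFor F (pureC F) := mps_pure_aux F C₀.card C₀ le_rfl h₀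
  refine ⟨⟨pure_prime F hp, hp⟩, ?_⟩
  intro C hCpr hCm
  have hsub : pureC F ⊆ C := pure_subset F C hCm
  rcases eq_or_ne C (pureC F) with h | h
  · exact h
  · exact absurd hp.2.1 (hCpr.2.2 (pureC F) (hsub.ssubset_of_ne (Ne.symm h)))
end

section
/- An unsatisfiable clause-set is a minimal premise set if and only if it is minimally unsatisfiable. -/
/-- An unsatisfiable clause-set is a minimal premise set iff it is minimally unsatisfiable. -/
theorem unsat_mps_iff_minUnsat (F : ClauseSet) (hF : unsat F) :
    isMps F ↔ minUnsat F := by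
  constructor
  · rintro ⟨C, _, _, hmin⟩
    refine ⟨hF, fun F' hF' hun => hmin F' hF' ?_⟩
    intro a ha
    exact absurd ⟨a, ha⟩ hun
  · rintro ⟨_, hmin⟩
    refine ⟨∅, fun x hx => absurd hx (Finset.notMem_empty x), ?_, ?_⟩
    · intro a ha
      exact absurd ⟨a, ha⟩ hF
    · intro F' hF' hent
      refine hmin F' hF' ?_
      rintro ⟨a, ha⟩
      obtain ⟨x, hx, -⟩ := hent a ha
      exact absurd hx (Finset.notMem_empty x)
end

section
/- For every clause-set F, F is a minimal premise set if and only if its doped version D(F) is a minimal premise set; hence F' ↦ D(F') is a bijection between the minimal premise subsets of F and the minimal premise subsets of D(F). -/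
section MpsDope

lemma lit_eval_congr {a b : ℕ → Bool} {x : Lit} (h : a x.1 = b x.1) :
    Lit.eval a x = Lit.eval b x := by simp [Lit.eval, h]

lemma sat_congr {a b : ℕ → Bool} {C : Clause} (h : ∀ x ∈ C, a x.1 = b x.1)
    (hs : Clause.sat a C) : Clause.sat b C := by
  obtain ⟨x, hx, he⟩ := hs
  exact ⟨x, hx, by rw [← lit_eval_congr (h x hx)]; exact he⟩

lemma sat_subset {a : ℕ → Bool} {C D : Clause} (h : C ⊆ D) (hs : Clause.sat a C) :
    Clause.sat a D := by
  obtain ⟨x, hx, he⟩ := hs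
  exact ⟨x, h hx, he⟩

lemma var_mem_vars {F : ClauseSet} {C : Clause} {x : Lit} (hC : C ∈ F) (hx : x ∈ C) :
    x.1 ∈ vars F := by
  have h1 : varsC C ≤ vars F := Finset.le_sup hC
  exact Finset.le_iff_subset.mp h1 (Finset.mem_image_of_mem _ hx)

lemma vars_mono {F F' : ClauseSet} (h : F' ⊆ F) : vars F' ⊆ vars F :=
  Finset.le_iff_subset.mp (Finset.sup_mono h)

lemma satisfies_congr {a b : ℕ → Bool} {F : ClauseSet} (h : ∀ v ∈ vars F, a v = b v)
    (hs : satisfies a F) : satisfies b F :=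
  fun C hC => sat_congr (fun x hx => h x.1 (var_mem_vars hC hx)) (hs C hC)

lemma tautFree_subset {C D : Clause} (h : C ⊆ D) (ht : tautFree D) : tautFree C :=
  fun x hx hc => ht x (h hx) (h hc)

lemma mem_vars_dope {u : Clause → ℕ} {F : ClauseSet} {v : ℕ} (hv : v ∈ vars (dope u F)) :
    v ∈ vars F ∨ ∃ B ∈ F, v = u B := by
  obtain ⟨D, hD, hvD⟩ := Finset.mem_sup.mp hv
  obtain ⟨B, hB, rfl⟩ := Finset.mem_image.mp hD
  obtain ⟨x, hx, rfl⟩ := Finset.mem_image.mp hvD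
  rcases Finset.mem_insert.mp hx with h | h
  · exact Or.inr ⟨B, hB, by rw [h]⟩
  · exact Or.inl (var_mem_vars hB h)

/-- An mps can be witnessed by a clause with variables inside `vars F`. -/
lemma mps_restrict {F : ClauseSet} {C : Clause} (h : mpsFor F C) :
    mpsFor F (C.filter (fun x => x.1 ∈ vars F)) := by
  obtain ⟨ht, he, hmin⟩ := h
  refine ⟨tautFree_subset (Finset.filter_subset _ _) ht, ?_, ?_⟩
  · intro a ha
    set b : ℕ → Bool := fun v => if v ∈ vars F then a v else (((v, false) : Lit) ∈ C)
      with hbdef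
    have hb : satisfies b F := satisfies_congr (fun v hv => by simp [hbdef, hv]) ha
    obtain ⟨x, hxC, hxe⟩ := he b hb
    have hxv : x.1 ∈ vars F := by
      by_contra hv
      obtain ⟨xv, xb⟩ := x
      have hv' : xv ∉ vars F := hv
      cases xb with
      | true =>
        have : ((xv, false) : Lit) ∈ C := by simpa [hbdef, Lit.eval, hv'] using hxe
        exact ht _ hxC (by simpa [Lit.comp] using this)
      | false =>
        have : ((xv, false) : Lit) ∉ C := by simpa [hbdef, Lit.eval, hv'] using hxe
        exact this hxC
    refine ⟨x, Finset.mem_filter.mpr ⟨hxC, hxv⟩, ?_⟩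
    rw [lit_eval_congr (a := a) (b := b) (by simp [hbdef, hxv])]
    exact hxe
  · intro F' hF' hent
    exact hmin F' hF' (fun a ha => sat_subset (Finset.filter_subset _ _) (hent a ha))

lemma doper_mem_dope {u : Clause → ℕ} {F : ClauseSet} {B : Clause} (hB : B ∈ F) :
    insert ((u B, true) : Lit) B ∈ dope u F := Finset.mem_image_of_mem _ hB

lemma dope_inj_clause {u : Clause → ℕ} {F : ClauseSet} (hu : freshDoping u F)
    {B1 B2 : Clause} (h1 : B1 ∈ F) (h2 : B2 ∈ F)
    (h : insert ((u B1, true) : Lit) B1 = insert ((u B2, true) : Lit) B2) : B1 = B2 := by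
  have hmem : ((u B1, true) : Lit) ∈ insert ((u B2, true) : Lit) B2 := by
    rw [← h]; exact Finset.mem_insert_self _ _
  rcases Finset.mem_insert.mp hmem with heq | hmem2
  · exact hu.2 h1 h2 (by simpa using heq)
  · exact absurd (var_mem_vars h2 hmem2) (hu.1 B1 h1)

lemma dope_subset_ex {u : Clause → ℕ} {F G : ClauseSet} (hG : G ⊆ dope u F) :
    ∃ F', F' ⊆ F ∧ dope u F' = G := by
  refine ⟨F.filter (fun B => insert ((u B, true) : Lit) B ∈ G),
    Finset.filter_subset _ _, ?_⟩
  apply Finset.Subset.antisymm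
  · intro D hD
    obtain ⟨B, hB, rfl⟩ := Finset.mem_image.mp hD
    exact (Finset.mem_filter.mp hB).2
  · intro D hD
    obtain ⟨B, hB, rfl⟩ := Finset.mem_image.mp (hG hD)
    exact Finset.mem_image_of_mem _ (Finset.mem_filter.mpr ⟨hB, hD⟩)

lemma dope_mono {u : Clause → ℕ} {F F' : ClauseSet} (h : F' ⊆ F) :
    dope u F' ⊆ dope u F := Finset.image_subset_image h

lemma dope_inj_sets {u : Clause → ℕ} {F F1 F2 : ClauseSet} (hu : freshDoping u F)
    (h1 : F1 ⊆ F) (h2 : F2 ⊆ F) (h : dope u F1 = dope u F2) : F1 = F2 := by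
  apply Finset.Subset.antisymm <;> intro B hB
  · have : insert ((u B, true) : Lit) B ∈ dope u F2 := h ▸ doper_mem_dope hB
    obtain ⟨B', hB', heq⟩ := Finset.mem_image.mp this
    exact dope_inj_clause hu (h2 hB') (h1 hB) heq ▸ hB'
  · have : insert ((u B, true) : Lit) B ∈ dope u F1 := h ▸ doper_mem_dope hB
    obtain ⟨B', hB', heq⟩ := Finset.mem_image.mp this
    exact dope_inj_clause hu (h1 hB') (h2 hB) heq ▸ hB'

lemma dope_ssubset {u : Clause → ℕ} {F F' : ClauseSet} (hu : freshDoping u F)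
    (h : F' ⊂ F) : dope u F' ⊂ dope u F := by
  refine ⟨dope_mono h.1, fun hle => h.2 ?_⟩
  intro B hB
  have : insert ((u B, true) : Lit) B ∈ dope u F' := hle (doper_mem_dope hB)
  obtain ⟨B', hB', heq⟩ := Finset.mem_image.mp this
  exact dope_inj_clause hu (h.1 hB') hB heq ▸ hB'

lemma freshDoping_subset {u : Clause → ℕ} {F F' : ClauseSet} (hu : freshDoping u F)
    (h : F' ⊆ F) : freshDoping u F' :=
  ⟨fun C hC hv => hu.1 C (h hC) (vars_mono h hv), hu.2.mono (by exact_mod_cast h)⟩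

/-- Core lemma: F is an mps iff its doping is. -/
lemma isMps_dope_iff {u : Clause → ℕ} {F : ClauseSet} (hu : freshDoping u F) :
    isMps F ↔ isMps (dope u F) := by
  constructor
  · rintro ⟨C0, hC0⟩
    have hC := mps_restrict hC0
    set C : Clause := C0.filter (fun x => x.1 ∈ vars F) with hCdef
    have hCvars : ∀ x ∈ C, x.1 ∈ vars F := fun x hx => (Finset.mem_filter.mp hx).2
    set D : Clause := C ∪ F.image (fun B => ((u B, true) : Lit)) with hDdef
    refine ⟨D, ?_, ?_, ?_⟩
    · -- tautFree D
      intro x hx hcx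
      rcases Finset.mem_union.mp hx with hxC | hxU
      · rcases Finset.mem_union.mp hcx with hcC | hcU
        · exact hC.1 x hxC hcC
        · obtain ⟨B, hB, heq⟩ := Finset.mem_image.mp hcU
          have huB : u B = x.1 := congrArg Prod.fst heq
          exact hu.1 B hB (by rw [huB]; exact hCvars x hxC)
      · obtain ⟨B, hB, heq⟩ := Finset.mem_image.mp hxU
        have hcomp : Lit.comp x = ((u B, false) : Lit) := by
          rw [← heq]; simp [Lit.comp]
        rcases Finset.mem_union.mp hcx with hcC | hcU
        · have : (Lit.comp x).1 ∈ vars F := hCvars _ hcC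
          rw [hcomp] at this
          exact hu.1 B hB this
        · obtain ⟨B', hB', heq'⟩ := Finset.mem_image.mp hcU
          rw [hcomp] at heq'
          exact Bool.noConfusion (congrArg Prod.snd heq' : true = false)
    · -- entails
      intro a ha
      by_cases hex : ∃ B ∈ F, a (u B) = true
      · obtain ⟨B, hB, hab⟩ := hex
        exact ⟨((u B, true) : Lit), Finset.mem_union_right _ (Finset.mem_image_of_mem _ hB),
          by simp [Lit.eval, hab]⟩
      · push_neg at hex
        have haF : satisfies a F := by
          intro B hB
          obtain ⟨x, hx, he⟩ := ha _ (doper_mem_dope hB)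
          rcases Finset.mem_insert.mp hx with rfl | hxB
          · simp [Lit.eval] at he
            exact absurd he (by simpa using hex B hB)
          · exact ⟨x, hxB, he⟩
        exact sat_subset Finset.subset_union_left (hC.2.1 a haF)
    · -- minimality
      intro G hG hent
      obtain ⟨F', hF'sub, rfl⟩ := dope_subset_ex hG.1
      have hF'ss : F' ⊂ F := by
        refine ⟨hF'sub, fun hle => hG.2 (dope_mono hle)⟩
      apply hC.2.2 F' hF'ss
      intro a ha
      set b : ℕ → Bool := fun v => if v ∈ vars F then a v else false with hbdef
      have hb : satisfies b F' :=
        satisfies_congr (fun v hv => by simp [hbdef, vars_mono hF'sub hv]) ha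
      have hbd : satisfies b (dope u F') := by
        intro D' hD'
        obtain ⟨B, hB, rfl⟩ := Finset.mem_image.mp hD'
        exact sat_subset (Finset.subset_insert _ _) (hb B hB)
      obtain ⟨x, hx, he⟩ := hent b hbd
      rcases Finset.mem_union.mp hx with hxC | hxU
      · refine ⟨x, hxC, ?_⟩
        rw [lit_eval_congr (a := a) (b := b) (by simp [hbdef, hCvars x hxC])]
        exact he
      · obtain ⟨B, hB, rfl⟩ := Finset.mem_image.mp hxU
        have : b (u B) = false := by simp [hbdef, hu.1 B hB]
        simp [Lit.eval, this] at he
  · rintro ⟨D0, hD0⟩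
    have hD := mps_restrict hD0
    set D : Clause := D0.filter (fun x => x.1 ∈ vars (dope u F)) with hDdef
    have hDvars : ∀ x ∈ D, x.1 ∈ vars (dope u F) := fun x hx => (Finset.mem_filter.mp hx).2
    -- Step A: every positive doping literal occurs in D
    have hposU : ∀ B ∈ F, ((u B, true) : Lit) ∈ D := by
      intro B hB
      by_contra hnot
      have hGss : (dope u F).erase (insert ((u B, true) : Lit) B) ⊂ dope u F :=
        Finset.erase_ssubset (doper_mem_dope hB)
      apply hD.2.2 _ hGss
      intro a ha
      set b : ℕ → Bool := fun v => if v = u B then true else a v with hbdef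
      have hbF : satisfies b (dope u F) := by
        intro D' hD'
        obtain ⟨B', hB', rfl⟩ := Finset.mem_image.mp hD'
        by_cases heq : insert ((u B', true) : Lit) B' = insert ((u B, true) : Lit) B
        · rw [heq]
          exact ⟨((u B, true) : Lit), Finset.mem_insert_self _ _, by simp [Lit.eval, hbdef]⟩
        · have hmem : insert ((u B', true) : Lit) B' ∈
              (dope u F).erase (insert ((u B, true) : Lit) B) :=
            Finset.mem_erase.mpr ⟨heq, doper_mem_dope hB'⟩
          refine sat_congr (fun x hx => ?_) (ha _ hmem)
          have hxne : x.1 ≠ u B := by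
            rcases Finset.mem_insert.mp hx with rfl | hxB
            · intro hc
              exact heq (by rw [hu.2 hB' hB hc])
            · intro hc
              exact hu.1 B hB (hc ▸ var_mem_vars hB' hxB)
          simp [hbdef, hxne]
      obtain ⟨x, hx, he⟩ := hD.2.1 b hbF
      refine ⟨x, hx, ?_⟩
      have hxne : x.1 ≠ u B := by
        intro hc
        obtain ⟨xv, xb⟩ := x
        simp only at hc
        subst hc
        cases xb with
        | true => exact hnot hx
        | false => simp [Lit.eval, hbdef] at he
      rw [lit_eval_congr (a := a) (b := b) (by simp [hbdef, hxne])]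
      exact he
    set C : Clause := D.filter (fun x => x.1 ∈ vars F) with hCdef
    refine ⟨C, tautFree_subset (Finset.filter_subset _ _) hD.1, ?_, ?_⟩
    · -- entails F C
      intro a ha
      set b : ℕ → Bool := fun v => if v ∈ vars F then a v else false with hbdef
      have hb : satisfies b F := satisfies_congr (fun v hv => by simp [hbdef, hv]) ha
      have hbd : satisfies b (dope u F) := by
        intro D' hD'
        obtain ⟨B, hB, rfl⟩ := Finset.mem_image.mp hD'
        exact sat_subset (Finset.subset_insert _ _) (hb B hB)
      obtain ⟨x, hx, he⟩ := hD.2.1 b hbd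
      by_cases hxv : x.1 ∈ vars F
      · refine ⟨x, Finset.mem_filter.mpr ⟨hx, hxv⟩, ?_⟩
        rw [lit_eval_congr (a := a) (b := b) (by simp [hbdef, hxv])]
        exact he
      · exfalso
        rcases mem_vars_dope (hDvars x hx) with h | ⟨B, hB, heq⟩
        · exact hxv h
        · obtain ⟨xv, xb⟩ := x
          simp only at heq
          subst heq
          cases xb with
          | true => simp [Lit.eval, hbdef, hxv] at he
          | false =>
            exact hD.1 _ (hposU B hB) (by simpa [Lit.comp] using hx)
    · -- minimality
      intro F' hF' hent
      apply hD.2.2 (dope u F') (dope_ssubset hu hF')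
      intro a ha
      by_cases hex : ∃ B ∈ F', a (u B) = true
      · obtain ⟨B, hB, hab⟩ := hex
        exact ⟨((u B, true) : Lit), hposU B (hF'.1 hB), by simp [Lit.eval, hab]⟩
      · push_neg at hex
        have haF : satisfies a F' := by
          intro B hB
          obtain ⟨x, hx, he⟩ := ha _ (doper_mem_dope hB)
          rcases Finset.mem_insert.mp hx with rfl | hxB
          · simp [Lit.eval] at he
            exact absurd he (by simpa using hex B hB)
          · exact ⟨x, hxB, he⟩
        exact sat_subset (Finset.filter_subset _ _) (hent a haF)

end MpsDope

/-- F is a minimal premise set iff its doped version is, and doping is a bijection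
between the minimal premise subsets of F and those of D(F). -/
theorem mps_iff_dope_mps (F : ClauseSet) (u : Clause → ℕ) (hu : freshDoping u F) :
    (isMps F ↔ isMps (dope u F)) ∧
      Set.BijOn (dope u) {F' : ClauseSet | F' ⊆ F ∧ isMps F'}
        {G : ClauseSet | G ⊆ dope u F ∧ isMps G} := by
  refine ⟨isMps_dope_iff hu, ?_, ?_, ?_⟩
  · rintro F' ⟨hsub, hmps⟩
    exact ⟨dope_mono hsub, (isMps_dope_iff (freshDoping_subset hu hsub)).mp hmps⟩
  · rintro F1 ⟨h1, _⟩ F2 ⟨h2, _⟩ h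
    exact dope_inj_sets hu h1 h2 h
  · rintro G ⟨hsub, hmps⟩
    obtain ⟨F', hF', rfl⟩ := dope_subset_ex hsub
    exact ⟨F', ⟨hF', (isMps_dope_iff (freshDoping_subset hu hF')).mpr hmps⟩, rfl⟩
end

section
/- For every clause-set F, the map F' ↦ pure(F') is a bijection from the set mps(D(F)) of minimal premise subsets of the doped clause-set D(F) onto the set of prime implicates of D(F). -/
namespace DopeAux

open Finset

lemma sat_mono {a : ℕ → Bool} {C C' : Clause} (h : C ⊆ C') (hs : Clause.sat a C) :
    Clause.sat a C' := by obtain ⟨x, hx, he⟩ := hs; exact ⟨x, h hx, he⟩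

lemma satisfies_mono {a : ℕ → Bool} {F F' : ClauseSet} (h : F' ⊆ F) (hs : satisfies a F) :
    satisfies a F' := fun C hC => hs C (h hC)

lemma entails_clause_mono {F : ClauseSet} {C C' : Clause} (h : C ⊆ C') (he : entails F C) :
    entails F C' := fun a ha => sat_mono h (he a ha)

lemma entails_set_mono {F F' : ClauseSet} {C : Clause} (h : F ⊆ F') (he : entails F C) :
    entails F' C := fun a ha => he a (satisfies_mono h ha)

lemma tautFree_mono {C C' : Clause} (h : C' ⊆ C) (ht : tautFree C) : tautFree C' :=
  fun x hx hc => ht x (h hx) (h hc)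

@[simp] lemma comp_fst (x : Lit) : (Lit.comp x).1 = x.1 := rfl

@[simp] lemma comp_comp (x : Lit) : Lit.comp (Lit.comp x) = x := by
  simp [Lit.comp]

lemma eval_comp (a : ℕ → Bool) (x : Lit) : Lit.eval a (Lit.comp x) = !(Lit.eval a x) := by
  obtain ⟨v, b⟩ := x; cases b <;> simp [Lit.eval, Lit.comp]

lemma eval_congr {a a' : ℕ → Bool} (x : Lit) (h : a x.1 = a' x.1) :
    Lit.eval a x = Lit.eval a' x := by
  unfold Lit.eval; rw [h]

lemma eval_mk_true (a : ℕ → Bool) (x : Lit) :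
    Lit.eval (Function.update a x.1 x.2) x = true := by
  cases hb : x.2 <;> simp [Lit.eval, hb, Function.update_self]

lemma eval_update_ne (a : ℕ → Bool) {x : Lit} {v : ℕ} (b : Bool) (h : x.1 ≠ v) :
    Lit.eval (Function.update a v b) x = Lit.eval a x :=
  eval_congr x (by rw [Function.update_of_ne h])

lemma lit_cases (x y : Lit) (h : y.1 = x.1) : y = x ∨ y = Lit.comp x := by
  obtain ⟨v, b⟩ := y; obtain ⟨w, c⟩ := x
  simp only at h; subst h
  cases b <;> cases c <;> simp [Lit.comp]

lemma sat_flip {a : ℕ → Bool} (x : Lit) {C : Clause} (hc : Lit.comp x ∉ C)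
    (h : Clause.sat a C) : Clause.sat (Function.update a x.1 x.2) C := by
  obtain ⟨y, hy, hey⟩ := h
  by_cases hv : y.1 = x.1
  · rcases lit_cases x y hv with rfl | rfl
    · exact ⟨y, hy, eval_mk_true a y⟩
    · exact absurd hy hc
  · exact ⟨y, hy, by rwa [eval_update_ne a _ hv]⟩

lemma sat_update_of_not_var {a : ℕ → Bool} {C : Clause} {v : ℕ} {b : Bool}
    (h : ∀ y ∈ C, y.1 ≠ v) :
    Clause.sat (Function.update a v b) C ↔ Clause.sat a C := by
  constructor
  · rintro ⟨y, hy, hey⟩; exact ⟨y, hy, by rwa [eval_update_ne a b (h y hy)] at hey⟩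
  · rintro ⟨y, hy, hey⟩; exact ⟨y, hy, by rwa [eval_update_ne a b (h y hy)]⟩

lemma mem_lits {F : ClauseSet} {x : Lit} : x ∈ lits F ↔ ∃ C ∈ F, x ∈ C := by
  simp [lits, Finset.mem_sup]

lemma var_mem_vars {F : ClauseSet} {C : Clause} {x : Lit} (hC : C ∈ F) (hx : x ∈ C) :
    x.1 ∈ vars F := by
  refine Finset.mem_sup.2 ⟨C, hC, ?_⟩
  exact Finset.mem_image.2 ⟨x, hx, rfl⟩

lemma mem_pureC {F : ClauseSet} {x : Lit} :
    x ∈ pureC F ↔ x ∈ lits F ∧ Lit.comp x ∉ lits F := by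
  simp [pureC, Finset.mem_filter]

lemma exists_min_entails (G : ClauseSet) : ∀ C : Clause, entails G C →
    ∃ E, E ⊆ C ∧ entails G E ∧ ∀ E' ⊂ E, ¬ entails G E' := by
  intro C
  induction C using Finset.strongInduction with
  | _ C ih =>
    intro h
    by_cases h' : ∃ E', E' ⊂ C ∧ entails G E'
    · obtain ⟨E', hsub, hE'⟩ := h'
      obtain ⟨E, h1, h2, h3⟩ := ih E' hsub hE'
      exact ⟨E, h1.trans hsub.subset, h2, h3⟩
    · push_neg at h'
      exact ⟨C, subset_rfl, h, h'⟩

/-- Literals of a clause entailed minimally occur in the clause-set. -/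
lemma mem_clause_of_min {G : ClauseSet} {E : Clause} (hT : tautFree E)
    (hent : entails G E) (hmin : ∀ E' ⊂ E, ¬ entails G E') :
    ∀ x ∈ E, ∃ K ∈ G, x ∈ K := by
  intro x hx
  by_contra hno
  push_neg at hno
  have h1 : ¬ entails G (E.erase x) := hmin _ (Finset.erase_ssubset hx)
  unfold entails at h1; push_neg at h1
  obtain ⟨a, ha, hne⟩ := h1
  set a' := Function.update a x.1 (Lit.comp x).2 with ha'
  have hsatG : satisfies a' G := by
    intro K hK
    have : Lit.comp (Lit.comp x) ∉ K := by rw [comp_comp]; exact hno K hK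
    exact sat_flip (Lit.comp x) this (ha K hK)
  obtain ⟨y, hy, hey⟩ := hent a' hsatG
  by_cases hv : y.1 = x.1
  · rcases lit_cases x y hv with rfl | rfl
    · have h2 := eval_mk_true a (Lit.comp y)
      rw [eval_comp] at h2
      simp only [comp_fst] at h2
      rw [← ha', hey] at h2
      simp at h2
    · exact hT x hx (by simpa using hy)
  · refine hne ⟨y, Finset.mem_erase.2 ⟨fun h => hv (by rw [h]), hy⟩, ?_⟩
    rwa [ha', eval_update_ne a _ hv] at hey

end DopeAux
namespace DopeAux

open Finset

/-- Core lemma: if S entails E premise-minimally and clause-minimally then pure(S) = E. -/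
lemma core_pure_eq {S : ClauseSet} {E : Clause} (hT : tautFree E)
    (hent : entails S E) (hpm : ∀ S' ⊂ S, ¬ entails S' E)
    (hcm : ∀ E' ⊂ E, ¬ entails S E') : pureC S = E := by
  apply Finset.Subset.antisymm
  · -- pure S ⊆ E
    intro x hx
    obtain ⟨hxl, hxc⟩ := mem_pureC.1 hx
    by_contra hxE
    by_cases hcx : Lit.comp x ∈ E
    · -- clause-minimality case
      have h1 : ¬ entails S (E.erase (Lit.comp x)) := hcm _ (Finset.erase_ssubset hcx)
      unfold entails at h1; push_neg at h1
      obtain ⟨a, ha, hne⟩ := h1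
      set a' := Function.update a x.1 x.2 with ha'
      have hsat : satisfies a' S := by
        intro C hC
        have : Lit.comp x ∉ C := fun h => hxc (mem_lits.2 ⟨C, hC, h⟩)
        exact sat_flip x this (ha C hC)
      obtain ⟨z, hz, hez⟩ := hent a' hsat
      by_cases hv : z.1 = x.1
      · rcases lit_cases x z hv with rfl | rfl
        · exact hxE hz
        · have h2 := eval_mk_true a x
          rw [← ha'] at h2
          rw [eval_comp, h2] at hez
          simp at hez
      · refine hne ⟨z, Finset.mem_erase.2 ⟨fun h => hv (by rw [h]; rfl), hz⟩, ?_⟩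
        rwa [ha', eval_update_ne a _ hv] at hez
    · -- premise-minimality case
      obtain ⟨K, hK, hxK⟩ := mem_lits.1 hxl
      have h1 : ¬ entails (S.erase K) E := hpm _ (Finset.erase_ssubset hK)
      unfold entails at h1; push_neg at h1
      obtain ⟨a, ha, hne⟩ := h1
      set a' := Function.update a x.1 x.2 with ha'
      have hsat : satisfies a' S := by
        intro C hC
        by_cases hCK : C = K
        · exact ⟨x, hCK ▸ hxK, by rw [ha']; exact eval_mk_true a x⟩
        · have hC' : C ∈ S.erase K := Finset.mem_erase.2 ⟨hCK, hC⟩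
          have : Lit.comp x ∉ C := fun h => hxc (mem_lits.2 ⟨C, hC, h⟩)
          exact sat_flip x this (ha C hC')
      obtain ⟨z, hz, hez⟩ := hent a' hsat
      by_cases hv : z.1 = x.1
      · rcases lit_cases x z hv with rfl | rfl
        · exact hxE hz
        · exact hcx hz
      · refine hne ⟨z, hz, ?_⟩
        rwa [ha', eval_update_ne a _ hv] at hez
  · -- E ⊆ pure S
    intro x hx
    refine mem_pureC.2 ⟨?_, ?_⟩
    · obtain ⟨K, hK, hxK⟩ := mem_clause_of_min hT hent hcm x hx
      exact mem_lits.2 ⟨K, hK, hxK⟩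
    · intro hc
      obtain ⟨K, hK, hcK⟩ := mem_lits.1 hc
      have h1 : ¬ entails (S.erase K) E := hpm _ (Finset.erase_ssubset hK)
      unfold entails at h1; push_neg at h1
      obtain ⟨a, ha, hne⟩ := h1
      have hex : Lit.eval a x = false := by
        cases hb : Lit.eval a x
        · rfl
        · exact absurd ⟨x, hx, hb⟩ hne
      have hsat : satisfies a S := by
        intro C hC
        by_cases hCK : C = K
        · subst hCK
          exact ⟨Lit.comp x, hcK, by rw [eval_comp, hex]; rfl⟩
        · exact ha C (Finset.mem_erase.2 ⟨hCK, hC⟩)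
      exact hne (hent a hsat)

end DopeAux
namespace DopeAux

open Finset

variable {u : Clause → ℕ} {F : ClauseSet}

/-- The doped clause. -/
def dC (u : Clause → ℕ) (C : Clause) : Clause := insert ((u C, true) : Lit) C

/-- The clause of doping literals of S. -/
def US (u : Clause → ℕ) (S : ClauseSet) : Clause :=
  S.image (fun C => ((u C, true) : Lit))

lemma dope_eq_image (S : ClauseSet) : dope u S = S.image (dC u) := rfl

lemma mem_dope {K : Clause} {S : ClauseSet} : K ∈ dope u S ↔ ∃ C ∈ S, dC u C = K := by
  simp [dope_eq_image]

lemma mem_US {x : Lit} {S : ClauseSet} : x ∈ US u S ↔ ∃ C ∈ S, ((u C, true) : Lit) = x := by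
  simp [US]

lemma vars_subset {S : ClauseSet} (hS : S ⊆ F) {C : Clause} {x : Lit}
    (hC : C ∈ S) (hx : x ∈ C) : x.1 ∈ vars F := var_mem_vars (hS hC) hx

section WithHu
variable (hu : freshDoping u F)

include hu

lemma u_not_vars {C : Clause} (hC : C ∈ F) : u C ∉ vars F := hu.1 C hC

lemma u_inj {C K : Clause} (hC : C ∈ F) (hK : K ∈ F) (h : u C = u K) : C = K :=
  hu.2 hC hK h

lemma dC_inj {C K : Clause} (hC : C ∈ F) (hK : K ∈ F) (h : dC u C = dC u K) : C = K := by
  have h1 : ((u C, true) : Lit) ∈ dC u K := h ▸ Finset.mem_insert_self _ _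
  rcases Finset.mem_insert.1 h1 with h2 | h2
  · exact u_inj hu hC hK (by exact congrArg Prod.fst h2)
  · exact absurd (var_mem_vars hK h2) (u_not_vars hu hC)

lemma US_mem_elim {S : ClauseSet} (hS : S ⊆ F) {C : Clause} (hC : C ∈ F)
    (h : ((u C, true) : Lit) ∈ US u S) : C ∈ S := by
  obtain ⟨C', hC', he⟩ := mem_US.1 h
  have : u C' = u C := congrArg Prod.fst he
  rwa [← u_inj hu (hS hC') hC this]

end WithHu

lemma subset_dope_eq {S G : ClauseSet} (hG : G ⊆ dope u S) :
    G = dope u (S.filter (fun C => dC u C ∈ G)) := by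
  ext K
  simp only [mem_dope, Finset.mem_filter]
  constructor
  · intro hK
    obtain ⟨C, hC, he⟩ := mem_dope.1 (hG hK)
    exact ⟨C, ⟨hC, he ▸ hK⟩, he⟩
  · rintro ⟨C, ⟨hC, hCG⟩, rfl⟩
    exact hCG

lemma dope_mono {S S' : ClauseSet} (h : S' ⊆ S) : dope u S' ⊆ dope u S :=
  Finset.image_subset_image h

lemma dope_ssubset (hu : freshDoping u F) {S S' : ClauseSet} (hS : S ⊆ F)
    (h : S' ⊂ S) : dope u S' ⊂ dope u S := by
  refine ⟨dope_mono h.subset, fun hc => ?_⟩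
  obtain ⟨K, hKS, hKS'⟩ := Finset.exists_of_ssubset h
  have : dC u K ∈ dope u S' := hc (mem_dope.2 ⟨K, hKS, rfl⟩)
  obtain ⟨C, hC, he⟩ := mem_dope.1 this
  exact hKS' (dC_inj hu (hS (h.subset hC)) (hS hKS) he ▸ hC)

lemma ssubset_dope {S G : ClauseSet}
    (h : G ⊂ dope u S) :
    ∃ S', S' ⊂ S ∧ G = dope u S' := by
  refine ⟨S.filter (fun C => dC u C ∈ G), ?_, subset_dope_eq h.subset⟩
  refine ⟨Finset.filter_subset _ _, fun hc => ?_⟩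
  have : dope u S ⊆ G := by
    intro K hK
    obtain ⟨C, hC, rfl⟩ := mem_dope.1 hK
    exact (Finset.mem_filter.1 (hc hC)).2
  exact h.2 this

lemma lits_dope {S : ClauseSet} {x : Lit} :
    x ∈ lits (dope u S) ↔ x ∈ US u S ∨ x ∈ lits S := by
  rw [mem_lits]
  constructor
  · rintro ⟨K, hK, hx⟩
    obtain ⟨C, hC, rfl⟩ := mem_dope.1 hK
    rcases Finset.mem_insert.1 hx with rfl | hx
    · exact Or.inl (mem_US.2 ⟨C, hC, rfl⟩)
    · exact Or.inr (mem_lits.2 ⟨C, hC, hx⟩)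
  · rintro (hx | hx)
    · obtain ⟨C, hC, rfl⟩ := mem_US.1 hx
      exact ⟨dC u C, mem_dope.2 ⟨C, hC, rfl⟩, Finset.mem_insert_self _ _⟩
    · obtain ⟨C, hC, hxC⟩ := mem_lits.1 hx
      exact ⟨dC u C, mem_dope.2 ⟨C, hC, rfl⟩, Finset.mem_insert_of_mem hxC⟩

/-- Computation of the pure literals of a doped clause-set. -/
lemma pure_dope (hu : freshDoping u F) {S : ClauseSet} (hS : S ⊆ F) :
    pureC (dope u S) = US u S ∪ pureC S := by
  ext x
  rw [mem_pureC, lits_dope, Finset.mem_union, mem_pureC]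
  constructor
  · rintro ⟨hx | hx, hc⟩
    · exact Or.inl hx
    · exact Or.inr ⟨hx, fun h => hc (lits_dope.2 (Or.inr h))⟩
  · rintro (hx | ⟨hx, hc⟩)
    · obtain ⟨C, hC, rfl⟩ := mem_US.1 hx
      refine ⟨Or.inl hx, fun hmem => ?_⟩
      rcases lits_dope.1 hmem with h | h
      · obtain ⟨C', hC', he⟩ := mem_US.1 h
        exact absurd (congrArg Prod.snd he) (by simp [Lit.comp])
      · have := mem_lits.1 h
        obtain ⟨C', hC', hxC'⟩ := this
        have : (Lit.comp (u C, true)).1 ∈ vars F := vars_subset hS hC' hxC'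
        exact absurd this (u_not_vars hu (hS hC))
    · have hxv : x.1 ∈ vars F := by
        obtain ⟨C, hC, hxC⟩ := mem_lits.1 hx
        exact vars_subset hS hC hxC
      refine ⟨Or.inr hx, fun hmem => ?_⟩
      rcases lits_dope.1 hmem with h | h
      · obtain ⟨C', hC', he⟩ := mem_US.1 h
        have : u C' = x.1 := congrArg Prod.fst he
        exact u_not_vars hu (hS hC') (this ▸ hxv)
      · exact hc h

end DopeAux
namespace DopeAux

open Finset

variable {u : Clause → ℕ} {F : ClauseSet}

/-- Extension of an assignment on F-variables by values for the doping variables: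
false on doping variables of S, true on the other doping variables. -/
def extA (u : Clause → ℕ) (F S : ClauseSet) (b : ℕ → Bool) : ℕ → Bool :=
  fun v => if v ∈ F.image u then decide (v ∉ S.image u) else b v

section WithHu
variable (hu : freshDoping u F)
include hu

lemma extA_vars {S : ClauseSet} {b : ℕ → Bool} {v : ℕ} (hv : v ∈ vars F) :
    extA u F S b v = b v := by
  unfold extA
  rw [if_neg]
  intro h
  obtain ⟨C, hC, rfl⟩ := Finset.mem_image.1 h
  exact hu.1 C hC hv

lemma extA_eval {S : ClauseSet} {b : ℕ → Bool} {x : Lit} (hv : x.1 ∈ vars F) :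
    Lit.eval (extA u F S b) x = Lit.eval b x :=
  eval_congr x (extA_vars hu hv)

omit hu in
lemma extA_u_mem {S : ClauseSet} (hS : S ⊆ F) {b : ℕ → Bool} {C : Clause} (hC : C ∈ S) :
    extA u F S b (u C) = false := by
  unfold extA
  rw [if_pos (Finset.mem_image.2 ⟨C, hS hC, rfl⟩)]
  simp [Finset.mem_image.2 ⟨C, hC, rfl⟩]

lemma extA_u_not {S : ClauseSet} (hS : S ⊆ F) {b : ℕ → Bool} {C : Clause}
    (hC : C ∈ F) (hC' : C ∉ S) : extA u F S b (u C) = true := by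
  unfold extA
  rw [if_pos (Finset.mem_image.2 ⟨C, hC, rfl⟩)]
  simp only [decide_eq_true_eq]
  intro h
  obtain ⟨C', hC'2, he⟩ := Finset.mem_image.1 h
  exact hC' (hu.2 (hS hC'2) hC he ▸ hC'2)

/-- Semantic bridge, forward direction. -/
lemma sem {P S : ClauseSet} (hP : P ⊆ F) (hS : S ⊆ F) {E : Clause}
    (hE : ∀ x ∈ E, x.1 ∈ vars F)
    (h : entails (dope u P) (US u S ∪ E)) : entails (P ∩ S) E := by
  intro b hb
  by_contra hnb
  set a := extA u F S b with ha
  have hsat : satisfies a (dope u P) := by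
    intro K hK
    obtain ⟨C, hC, rfl⟩ := mem_dope.1 hK
    by_cases hCS : C ∈ S
    · obtain ⟨y, hy, hey⟩ := hb C (Finset.mem_inter.2 ⟨hC, hCS⟩)
      refine ⟨y, Finset.mem_insert_of_mem hy, ?_⟩
      rw [ha, extA_eval hu (var_mem_vars (hP hC) hy)]
      exact hey
    · refine ⟨(u C, true), Finset.mem_insert_self _ _, ?_⟩
      show a (u C) = true
      rw [ha]; exact extA_u_not hu hS (hP hC) hCS
  obtain ⟨y, hy, hey⟩ := h a hsat
  rcases Finset.mem_union.1 hy with hyU | hyE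
  · obtain ⟨C, hCS, rfl⟩ := mem_US.1 hyU
    have : a (u C) = false := by rw [ha]; exact extA_u_mem hS hCS
    rw [show Lit.eval a (u C, true) = a (u C) from rfl, this] at hey
    exact Bool.false_ne_true hey
  · rw [ha, extA_eval hu (hE y hyE)] at hey
    exact hnb ⟨y, hyE, hey⟩

end WithHu

/-- Semantic bridge, backward direction. -/
lemma sem2 {P S : ClauseSet} (hSP : S ⊆ P) {E : Clause} (h : entails S E) :
    entails (dope u P) (US u S ∪ E) := by
  intro a ha
  by_contra hns
  have hsatS : satisfies a S := by
    intro C hC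
    obtain ⟨y, hy, hey⟩ := ha (dC u C) (mem_dope.2 ⟨C, hSP hC, rfl⟩)
    rcases Finset.mem_insert.1 hy with rfl | hyC
    · exact absurd ⟨((u C, true) : Lit), Finset.mem_union_left _ (mem_US.2 ⟨C, hC, rfl⟩), hey⟩ hns
    · exact ⟨y, hyC, hey⟩
  exact hns (sat_mono Finset.subset_union_right (h a hsatS))

/-- If a doping literal does not occur in an entailed clause, the corresponding
doped clause can be removed. -/
lemma flip_lemma (hu : freshDoping u F) {S : ClauseSet} (hS : S ⊆ F) {K : Clause}
    (hK : K ∈ S) {E : Clause} (hvE : ∀ x ∈ E, x.1 ≠ u K)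
    (h : entails (dope u S) E) :
    entails ((dope u S).erase (dC u K)) E := by
  intro a ha
  by_contra hna
  set a' := Function.update a (u K) true with ha'
  have hsat : satisfies a' (dope u S) := by
    intro Kc hKc
    obtain ⟨C, hC, rfl⟩ := mem_dope.1 hKc
    by_cases hCK : C = K
    · subst hCK
      refine ⟨(u C, true), Finset.mem_insert_self _ _, ?_⟩
      show a' (u C) = true
      rw [ha', Function.update_self]
    · have hmem : dC u C ∈ (dope u S).erase (dC u K) :=
        Finset.mem_erase.2 ⟨fun he => hCK (dC_inj hu (hS hC) (hS hK) he), hKc⟩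
      have hsC := ha _ hmem
      rw [ha']
      refine (sat_update_of_not_var ?_).2 hsC
      intro y hy
      rcases Finset.mem_insert.1 hy with rfl | hyC
      · show u C ≠ u K
        exact fun he => hCK (hu.2 (hS hC) (hS hK) he)
      · exact fun he => hu.1 K (hS hK) (he ▸ var_mem_vars (hS hC) hyC)
  have hsE := h a' hsat
  rw [ha'] at hsE
  exact hna ((sat_update_of_not_var hvE).1 hsE)

/-- Decomposition of a clause all of whose literals occur in dope u S. -/
lemma clause_decomp {S : ClauseSet} (hS : S ⊆ F) {E' : Clause}
    (h : ∀ x ∈ E', ∃ K ∈ dope u S, x ∈ K) :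
    E' = US u (S.filter (fun C => ((u C, true) : Lit) ∈ E')) ∪
      E'.filter (fun x => x.1 ∈ vars F) := by
  ext x
  rw [Finset.mem_union, mem_US]
  constructor
  · intro hx
    by_cases hv : x.1 ∈ vars F
    · exact Or.inr (Finset.mem_filter.2 ⟨hx, hv⟩)
    · obtain ⟨K, hK, hxK⟩ := h x hx
      obtain ⟨C, hC, rfl⟩ := mem_dope.1 hK
      rcases Finset.mem_insert.1 hxK with rfl | hxC
      · exact Or.inl ⟨C, Finset.mem_filter.2 ⟨hC, hx⟩, rfl⟩
      · exact absurd (var_mem_vars (hS hC) hxC) hv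
  · rintro (⟨C, hC, rfl⟩ | hx)
    · exact (Finset.mem_filter.1 hC).2
    · exact (Finset.mem_filter.1 hx).1

end DopeAux
namespace DopeAux

open Finset

variable {u : Clause → ℕ} {F : ClauseSet}

lemma not_mem_US_of_var {S : ClauseSet} (hu : freshDoping u F) (hS : S ⊆ F)
    {x : Lit} (hx : x.1 ∈ vars F) : x ∉ US u S := by
  intro h
  obtain ⟨C, hC, rfl⟩ := mem_US.1 h
  exact hu.1 C (hS hC) hx

lemma maps_to (hu : freshDoping u F) {G : ClauseSet} (hGsub : G ⊆ dope u F)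
    (hmps : isMps G) : primeImp (dope u F) (pureC G) := by
  have hGS : G = dope u (F.filter (fun C => dC u C ∈ G)) := subset_dope_eq hGsub
  set S := F.filter (fun C => dC u C ∈ G) with hSdef
  have hS : S ⊆ F := Finset.filter_subset _ _
  obtain ⟨C0, hCt, hentC, hminC⟩ := hmps
  rw [hGS] at hentC hminC
  rw [hGS]
  clear hGS hGsub
  -- a clause-minimal entailed subclause of C0
  obtain ⟨E0, hE0C, hE0ent, hE0cm⟩ := exists_min_entails (dope u S) C0 hentC
  have hE0t : tautFree E0 := tautFree_mono hE0C hCt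
  have hE0pm : ∀ G' ⊂ dope u S, ¬ entails G' E0 := fun G' hG' he =>
    hminC G' hG' (entails_clause_mono hE0C he)
  have hlit : ∀ x ∈ E0, ∃ K ∈ dope u S, x ∈ K :=
    mem_clause_of_min hE0t hE0ent hE0cm
  have hdec := clause_decomp hS hlit
  set S0 := S.filter (fun C => ((u C, true) : Lit) ∈ E0) with hS0def
  set E := E0.filter (fun x => x.1 ∈ vars F) with hEdef
  have hEv : ∀ x ∈ E, x.1 ∈ vars F := fun x hx => (Finset.mem_filter.1 hx).2
  have hEsub : E ⊆ E0 := Finset.filter_subset _ _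
  -- S0 = S
  have hS0S : S0 = S := by
    refine Finset.Subset.antisymm (Finset.filter_subset _ _) ?_
    intro K hK
    by_contra hKn
    have hnotin : ((u K, true) : Lit) ∉ E0 := fun h =>
      hKn (by rw [hS0def]; exact Finset.mem_filter.2 ⟨hK, h⟩)
    have hvE : ∀ x ∈ E0, x.1 ≠ u K := by
      intro x hx he
      rw [hdec] at hx
      rcases Finset.mem_union.1 hx with hxU | hxE
      · obtain ⟨C, hC, rfl⟩ := mem_US.1 hxU
        have hCS : C ∈ S0 := hC
        have hCF : C ∈ F := hS (Finset.filter_subset _ _ (hS0def ▸ hCS))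
        have hCK : C = K := hu.2 hCF (hS hK) he
        have hCS' : C ∈ S.filter (fun C => ((u C, true) : Lit) ∈ E0) := hS0def ▸ hCS
        have : ((u C, true) : Lit) ∈ E0 := (Finset.mem_filter.1 hCS').2
        exact hnotin (hCK ▸ this)
      · exact hu.1 K (hS hK) (he ▸ hEv x hxE)
    have hflip := flip_lemma hu hS hK hvE hE0ent
    exact hE0pm _ (Finset.erase_ssubset (mem_dope.2 ⟨K, hK, rfl⟩)) hflip
  rw [hS0S] at hdec
  -- S entails E
  have hSE : entails S E := by
    have h1 : entails (dope u S) (US u S ∪ E) := by rw [← hdec]; exact hE0ent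
    have h2 := sem hu hS hS hEv h1
    rwa [Finset.inter_self] at h2
  -- premise-minimality of S for E
  have hpm : ∀ S' ⊂ S, ¬ entails S' E := by
    intro S' hS' he
    have h1 : entails (dope u S') (US u S' ∪ E) := sem2 subset_rfl he
    have h2 : entails (dope u S') E0 := by
      refine entails_clause_mono ?_ h1
      rw [hdec]
      exact Finset.union_subset_union (Finset.image_subset_image hS'.subset) subset_rfl
    exact hE0pm _ (dope_ssubset hu hS hS') h2
  -- clause-minimality of E for S
  have hcm : ∀ E'' ⊂ E, ¬ entails S E'' := by
    intro E'' hE'' he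
    have h1 : entails (dope u S) (US u S ∪ E'') := sem2 subset_rfl he
    refine hE0cm (US u S ∪ E'') ⟨?_, ?_⟩ h1
    · rw [hdec]; exact Finset.union_subset_union subset_rfl hE''.subset
    · obtain ⟨e, heE, heE''⟩ := Finset.exists_of_ssubset hE''
      intro hc
      have : e ∈ US u S ∪ E'' := hc (hdec ▸ Finset.mem_union_right _ heE)
      rcases Finset.mem_union.1 this with h | h
      · exact not_mem_US_of_var hu hS (hEv e heE) h
      · exact heE'' h
  have hEt : tautFree E := tautFree_mono hEsub hE0t
  have hpure : pureC S = E := core_pure_eq hEt hSE hpm hcm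
  -- conclude
  rw [pure_dope hu hS, hpure, ← hdec]
  refine ⟨hE0t, ?_, ?_⟩
  · rw [hdec]; exact sem2 hS hSE
  · intro C'' hC'' hent''
    have hlit'' : ∀ x ∈ C'', ∃ K ∈ dope u S, x ∈ K := fun x hx => hlit x (hC''.subset hx)
    have hdec'' := clause_decomp hS hlit''
    set S'' := S.filter (fun C => ((u C, true) : Lit) ∈ C'') with hS''def
    set E'' := C''.filter (fun x => x.1 ∈ vars F) with hE''def
    have hS''S : S'' ⊆ S := Finset.filter_subset _ _
    have hE''E : E'' ⊆ E := by
      intro x hx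
      have hx' : x ∈ C''.filter (fun x => x.1 ∈ vars F) := hE''def ▸ hx
      have hx1 : x ∈ C'' := (Finset.mem_filter.1 hx').1
      have hx2 : x.1 ∈ vars F := (Finset.mem_filter.1 hx').2
      have : x ∈ US u S ∪ E := hdec ▸ hC''.subset hx1
      rcases Finset.mem_union.1 this with h | h
      · exact absurd h (not_mem_US_of_var hu hS hx2)
      · exact h
    have hE''v : ∀ x ∈ E'', x.1 ∈ vars F := by
      intro x hx
      have hx' : x ∈ C''.filter (fun x => x.1 ∈ vars F) := hE''def ▸ hx
      exact (Finset.mem_filter.1 hx').2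
    rw [hdec''] at hent''
    have hsem := sem hu subset_rfl (hS''S.trans hS) hE''v hent''
    rw [Finset.inter_eq_right.2 (hS''S.trans hS)] at hsem
    by_cases hSeq : S'' = S
    · have hE''ne : E'' ≠ E := by
        intro h
        refine hC''.ne ?_
        rw [hdec'', hSeq, h, ← hdec]
      exact hcm E'' (Finset.ssubset_iff_subset_ne.2 ⟨hE''E, hE''ne⟩)
        (hSeq ▸ hsem)
    · exact hpm S'' (Finset.ssubset_iff_subset_ne.2 ⟨hS''S, hSeq⟩)
        (entails_clause_mono hE''E hsem)

end DopeAux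
namespace DopeAux

open Finset

variable {u : Clause → ℕ} {F : ClauseSet}

lemma US_union_pure_elim (hu : freshDoping u F) {S : ClauseSet} (hS : S ⊆ F)
    {C : Clause} (hC : C ∈ F) (h : ((u C, true) : Lit) ∈ US u S ∪ pureC S) : C ∈ S := by
  rcases Finset.mem_union.1 h with h | h
  · exact US_mem_elim hu hS hC h
  · obtain ⟨hl, -⟩ := mem_pureC.1 h
    obtain ⟨K, hK, hxK⟩ := mem_lits.1 hl
    exact absurd (var_mem_vars (hS hK) hxK) (hu.1 C hC)

lemma inj_on (hu : freshDoping u F) {G₁ G₂ : ClauseSet} (h1 : G₁ ⊆ dope u F)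
    (h2 : G₂ ⊆ dope u F) (hp : pureC G₁ = pureC G₂) : G₁ = G₂ := by
  have e1 : G₁ = dope u (F.filter (fun C => dC u C ∈ G₁)) := subset_dope_eq h1
  have e2 : G₂ = dope u (F.filter (fun C => dC u C ∈ G₂)) := subset_dope_eq h2
  set S₁ := F.filter (fun C => dC u C ∈ G₁) with hS₁def
  set S₂ := F.filter (fun C => dC u C ∈ G₂) with hS₂def
  have hS₁ : S₁ ⊆ F := Finset.filter_subset _ _
  have hS₂ : S₂ ⊆ F := Finset.filter_subset _ _
  rw [e1, e2, pure_dope hu hS₁, pure_dope hu hS₂] at hp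
  have hSS : S₁ = S₂ := by
    apply Finset.Subset.antisymm
    · intro C hC
      refine US_union_pure_elim hu hS₂ (hS₁ hC) ?_
      rw [← hp]
      exact Finset.mem_union_left _ (mem_US.2 ⟨C, hC, rfl⟩)
    · intro C hC
      refine US_union_pure_elim hu hS₁ (hS₂ hC) ?_
      rw [hp]
      exact Finset.mem_union_left _ (mem_US.2 ⟨C, hC, rfl⟩)
  rw [e1, e2, hSS]

lemma surj_aux (hu : freshDoping u F) {E' : Clause} (hprime : primeImp (dope u F) E') :
    ∃ G, (G ⊆ dope u F ∧ isMps G) ∧ pureC G = E' := by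
  obtain ⟨hEt, hEent, hEmin⟩ := hprime
  have hlit : ∀ x ∈ E', ∃ K ∈ dope u F, x ∈ K :=
    mem_clause_of_min hEt hEent hEmin
  have hdec := clause_decomp (subset_rfl : F ⊆ F) hlit
  set S := F.filter (fun C => ((u C, true) : Lit) ∈ E') with hSdef
  set E := E'.filter (fun x => x.1 ∈ vars F) with hEdef
  have hS : S ⊆ F := Finset.filter_subset _ _
  have hEv : ∀ x ∈ E, x.1 ∈ vars F := by
    intro x hx
    have hx' : x ∈ E'.filter (fun x => x.1 ∈ vars F) := hEdef ▸ hx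
    exact (Finset.mem_filter.1 hx').2
  have hEsub : E ⊆ E' := Finset.filter_subset _ _
  -- S entails E
  have hSE : entails S E := by
    have h1 : entails (dope u F) (US u S ∪ E) := by rw [← hdec]; exact hEent
    have h2 := sem hu subset_rfl hS hEv h1
    rwa [Finset.inter_eq_right.2 hS] at h2
  -- premise-minimality
  have hpm : ∀ S' ⊂ S, ¬ entails S' E := by
    intro S' hS' he
    have h1 : entails (dope u F) (US u S' ∪ E) := sem2 (hS'.subset.trans hS) he
    refine hEmin (US u S' ∪ E) ⟨?_, ?_⟩ h1
    · rw [hdec]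
      exact Finset.union_subset_union (Finset.image_subset_image hS'.subset) subset_rfl
    · obtain ⟨K, hKS, hKS'⟩ := Finset.exists_of_ssubset hS'
      intro hc
      have : ((u K, true) : Lit) ∈ US u S' ∪ E :=
        hc (hdec ▸ Finset.mem_union_left _ (mem_US.2 ⟨K, hKS, rfl⟩))
      rcases Finset.mem_union.1 this with h | h
      · exact hKS' (US_mem_elim hu (hS'.subset.trans hS) (hS hKS) h)
      · exact hu.1 K (hS hKS) (hEv _ h)
  -- clause-minimality
  have hcm : ∀ E'' ⊂ E, ¬ entails S E'' := by
    intro E'' hE'' he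
    have h1 : entails (dope u F) (US u S ∪ E'') := sem2 hS he
    refine hEmin (US u S ∪ E'') ⟨?_, ?_⟩ h1
    · rw [hdec]; exact Finset.union_subset_union subset_rfl hE''.subset
    · obtain ⟨e, heE, heE''⟩ := Finset.exists_of_ssubset hE''
      intro hc
      have : e ∈ US u S ∪ E'' := hc (hdec ▸ Finset.mem_union_right _ heE)
      rcases Finset.mem_union.1 this with h | h
      · exact not_mem_US_of_var hu hS (hEv e heE) h
      · exact heE'' h
  have hEt' : tautFree E := tautFree_mono hEsub hEt
  have hpure : pureC S = E := core_pure_eq hEt' hSE hpm hcm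
  refine ⟨dope u S, ⟨dope_mono hS, ?_⟩, ?_⟩
  · refine ⟨E', hEt, ?_, ?_⟩
    · have h1 : entails (dope u S) (US u S ∪ E) := sem2 subset_rfl hSE
      rwa [← hdec] at h1
    · intro G' hG' he'
      obtain ⟨S'', hS'', hGeq⟩ := ssubset_dope hG'
      rw [hGeq, hdec] at he'
      have hsem := sem hu (hS''.subset.trans hS) hS hEv he'
      rw [Finset.inter_eq_left.2 hS''.subset] at hsem
      exact hpm S'' hS'' hsem
  · rw [pure_dope hu hS, hpure, ← hdec]

end DopeAux
/-- For doped clause-sets, taking pure literals is a bijection from the minimal premise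
subsets of D(F) onto the prime implicates of D(F). -/
theorem dope_pure_bijOn_primeImplicates (F : ClauseSet) (u : Clause → ℕ)
    (hu : freshDoping u F) :
    Set.BijOn pureC {G : ClauseSet | G ⊆ dope u F ∧ isMps G}
      (primeSet (dope u F)) := by
  refine ⟨?_, ?_, ?_⟩
  · rintro G ⟨hsub, hmps⟩
    exact DopeAux.maps_to hu hsub hmps
  · rintro G₁ ⟨h1, -⟩ G₂ ⟨h2, -⟩ hp
    exact DopeAux.inj_on hu h1 h2 hp
  · rintro E' hE'
    obtain ⟨G, hG, hpure⟩ := DopeAux.surj_aux hu hE'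
    exact ⟨G, hG, hpure⟩
end
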